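/- arXiv:2512.14178 — 4 statements merged into one kernel-verified Lean document; each statement's English description precedes it below -/
import Mathlib

section
/- Let g, c, b, s, d be real numbers with g ≥ 2, b ≥ 0, 0 < c - b, c - b ≥ 1, s ≤ d(c-b)/(g+c), and d > 2g + 2c. Then (3/2)s + b(d - s - g + 1 - b) + c(s + b - c) < c(d - g + 1) - c². -/
/-- Key numerical inequality (E10) in the single-node stability proof. -/
theorem stmt_0 (g c b s d : ℝ) (hg : 2 ≤ g) (hb : 0 ≤ b)
    (hcb_pos : 0 < c - b) (hcb_one : 1 ≤ c - b)
    (hs : s ≤ d * (c - b) / (g + c)) (hd : d > 2 * g + 2 * c) :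
    (3 / 2) * s + b * (d - s - g + 1 - b) + c * (s + b - c) <
      c * (d - g + 1) - c ^ 2 := by
  have hgc : 0 < g + c := by linarith
  have hs' : s * (g + c) ≤ d * (c - b) := (le_div_iff₀ hgc).mp hs
  have key : d * (c - b + 3 / 2) < (d - g + 1 - b) * (g + c) := by
    nlinarith [mul_pos (show (0:ℝ) < d - 2 * (g + c) by linarith)
        (show (0:ℝ) < g + b - 3 / 2 by linarith),
      mul_nonneg hgc.le (show (0:ℝ) ≤ g + b - 2 by linarith)]
  have h1 : s * (g + c) * (c - b + 3 / 2) ≤ d * (c - b) * (c - b + 3 / 2) :=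
    mul_le_mul_of_nonneg_right hs' (by linarith)
  have h2 : d * (c - b + 3 / 2) * (c - b) < (d - g + 1 - b) * (g + c) * (c - b) :=
    mul_lt_mul_of_pos_right key hcb_pos
  nlinarith [hgc, h1, h2]
end

section
/- Let g, c, b, s, d, n be real numbers with g ≥ 3, b ≥ 0, c - b ≥ 1, s ≤ d(c-b)/(g+c), n ≤ g, and d > 10(g+c)/3. Then (3/2)s + n + b(d - s - g + 1 - b) + c(s + b - c) < c(d + 1 - g) - c². -/
/-- Key numerical inequality (E16) in the multi-node stability proof. -/
theorem stmt_4 (g c b s d n : ℝ) (hg : 3 ≤ g) (hb : 0 ≤ b)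
    (hcb : 1 ≤ c - b) (hs : s ≤ d * (c - b) / (g + c)) (hn : n ≤ g)
    (hd : d > 10 * (g + c) / 3) :
    (3 / 2) * s + n + b * (d - s - g + 1 - b) + c * (s + b - c) <
      c * (d + 1 - g) - c ^ 2 := by
  have hgc : 0 < g + c := by nlinarith
  have hs' : s * (g + c) ≤ d * (c - b) := (le_div_iff₀ hgc).mp hs
  have hd' : 3 * d > 10 * (g + c) := by linarith
  have A : (c - b + 3/2) * (s * (g + c)) ≤ (c - b + 3/2) * (d * (c - b)) :=
    mul_le_mul_of_nonneg_left hs' (by linarith)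
  have B : n * (g + c) ≤ g * (g + c) := by nlinarith
  have C : 0 < (3 * d - 10 * (g + c)) * ((c - b) * (g + b - 3/2)) := by
    apply mul_pos (by linarith); nlinarith
  have D : 0 ≤ (g + c) * ((c - b - 1) * ((7/3) * (g + b) - 4)) := by
    apply mul_nonneg (le_of_lt hgc); apply mul_nonneg (by linarith); nlinarith
  have E : 0 ≤ (g + c) * ((4/3) * g + (7/3) * b - 4) := by
    apply mul_nonneg (le_of_lt hgc); linarith
  have key : ((3 / 2) * s + n + b * (d - s - g + 1 - b) + c * (s + b - c)) * (g + c)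
      < (c * (d + 1 - g) - c ^ 2) * (g + c) := by nlinarith [A, B, C, D, E]
  exact lt_of_mul_lt_mul_right (by linarith [key]) (le_of_lt hgc)
end

section
/- Let A = ℂ[[x,y]]/(xy) (the complete local ring of an ordinary node) with maximal ideal 𝔪 = (x,y). Then Hom_A(𝔪, A), Hom_A(A, 𝔪), and Hom_A(𝔪, 𝔪) are not free A-modules, while Hom_A(A, A) ≅ A is free. -/
open MvPowerSeries

/-- The complete local ring `A = ℂ[[x,y]]/(xy)` of an ordinary node. -/
noncomputable abbrev NodalLocalRing : Type :=
  MvPowerSeries (Fin 2) ℂ ⧸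
    Ideal.span {(MvPowerSeries.X 0 * MvPowerSeries.X 1 : MvPowerSeries (Fin 2) ℂ)}

/-- The maximal ideal `𝔪 = (x, y)` of the nodal local ring. -/
noncomputable abbrev nodalMaxIdeal : Ideal NodalLocalRing :=
  Ideal.span
    {Ideal.Quotient.mk _ (MvPowerSeries.X 0), Ideal.Quotient.mk _ (MvPowerSeries.X 1)}

/-!
In `A` the annihilator of `x` is `(y)`, and by the equational criterion this persists in every
flat `A`-module: an element killed by `x` is `y` times something. Each of the three modules
contains an element `v` killed by `x` together with a linear map `E` to `A`, with values in `𝔪`,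
such that `E v = y`: for `Hom(𝔪, A)` and `Hom(𝔪, 𝔪)` take `v` the projection of
`𝔪 = (x) ⊕ (y)` onto `(y)` and `E` evaluation at `y`; for `Hom(A, 𝔪)` take `v : 1 ↦ y` and `E`
evaluation at `1`. Then `v = y • w` gives `y = y u` with `u = E w ∈ 𝔪`, so `1 - u` lies in the
annihilator `(x)` of `y`, and `1 ∈ 𝔪`. Hence these modules are not even flat.
-/

theorem MvPowerSeries.X_dvd_of_dvd_X_mul {σ R : Type*} [Semiring R] {s t : σ} (hst : s ≠ t)
    {φ : MvPowerSeries σ R} (h : X s ∣ X t * φ) : X s ∣ φ := by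
  classical
  rw [X_dvd_iff] at h ⊢
  intro m hm
  have hcoeff := h (Finsupp.single t 1 + m) (by simp [hst.symm, hm])
  rwa [X, coeff_add_monomial_mul, one_mul] at hcoeff

theorem MvPowerSeries.X_ne_zero {σ R : Type*} [Semiring R] [Nontrivial R] (s : σ) :
    (X s : MvPowerSeries σ R) ≠ 0 := fun h => by
  classical
  simpa using congr(coeff (Finsupp.single s 1) $h)

theorem Module.Flat.exists_eq_smul_of_smul_eq_zero {R M : Type*} [CommRing R] [AddCommGroup M]
    [Module R M] [Module.Flat R M] {a b : R} (hab : ∀ c : R, a * c = 0 → b ∣ c) {v : M}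
    (hv : a • v = 0) : ∃ w : M, v = b • w := by
  obtain ⟨k, c, u, hvu, hc⟩ := Module.Flat.isTrivialRelation_of_sum_smul_eq_zero
    (f := fun _ : Unit => a) (x := fun _ => v) (by simpa using hv)
  choose d hd using fun j => hab (c () j) (by simpa using hc j)
  refine ⟨∑ j, d j • u j, ?_⟩
  simp only [hvu (), hd, Finset.smul_sum, mul_smul]

namespace Ideal

variable {R : Type*} [CommRing R] {I J : Ideal R} (h : Disjoint I J)

/-- The projection of `I ⊔ J` onto `J` along `I`. -/
noncomputable def projOfDisjoint : ↥(I ⊔ J) →ₗ[R] R :=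
  (LinearPMap.sup ⟨I, 0⟩ ⟨J, J.subtype⟩ fun a b hab => by
    simpa [hab] using (Submodule.disjoint_def.1 h _ (hab ▸ a.2) b.2).symm).toFun

theorem projOfDisjoint_apply {a b : R} (ha : a ∈ I) (hb : b ∈ J) (z : ↥(I ⊔ J))
    (hz : a + b = z) : projOfDisjoint h z = b :=
  (LinearPMap.sup_apply (f := ⟨I, 0⟩) (g := ⟨J, J.subtype⟩) _ ⟨a, ha⟩ ⟨b, hb⟩ z hz).trans
    (by simp)

theorem projOfDisjoint_apply_mem (z : ↥(I ⊔ J)) : projOfDisjoint h z ∈ J := by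
  obtain ⟨a, ha, b, hb, hab⟩ := Submodule.mem_sup.1 z.2
  exact projOfDisjoint_apply h ha hb z hab ▸ hb

theorem projOfDisjoint_apply_of_mem {z : ↥(I ⊔ J)} (hz : (z : R) ∈ J) :
    projOfDisjoint h z = z :=
  projOfDisjoint_apply h I.zero_mem hz z (zero_add _)

end Ideal

namespace NodalLocalRing

noncomputable abbrev x : NodalLocalRing := Ideal.Quotient.mk _ (X 0)

noncomputable abbrev y : NodalLocalRing := Ideal.Quotient.mk _ (X 1)

theorem nodalMaxIdeal_eq_sup : nodalMaxIdeal = Ideal.span {x} ⊔ Ideal.span {y} :=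
  Ideal.span_insert _ _

theorem x_mul_y : x * y = 0 := by
  rw [← map_mul, Ideal.Quotient.eq_zero_iff_mem]
  exact Ideal.mem_span_singleton_self _

theorem y_dvd_of_x_mul_eq_zero {c : NodalLocalRing} (h : x * c = 0) : y ∣ c := by
  obtain ⟨C, rfl⟩ := Ideal.Quotient.mk_surjective c
  rw [← map_mul, Ideal.Quotient.eq_zero_iff_mem, Ideal.mem_span_singleton,
    mul_dvd_mul_iff_left (MvPowerSeries.X_ne_zero _)] at h
  exact map_dvd _ h

theorem x_dvd_of_y_mul_eq_zero {c : NodalLocalRing} (h : y * c = 0) : x ∣ c := by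
  obtain ⟨C, rfl⟩ := Ideal.Quotient.mk_surjective c
  rw [← map_mul, Ideal.Quotient.eq_zero_iff_mem, Ideal.mem_span_singleton, mul_comm (X 0),
    mul_dvd_mul_iff_left (MvPowerSeries.X_ne_zero _)] at h
  exact map_dvd _ h

theorem disjoint_span_x_span_y : Disjoint (Ideal.span {x}) (Ideal.span {y}) := by
  refine Submodule.disjoint_def.2 fun z hx hy => ?_
  obtain ⟨a, rfl⟩ := Ideal.mem_span_singleton'.1 hx
  obtain ⟨b, hab⟩ := Ideal.mem_span_singleton'.1 hy
  obtain ⟨A, rfl⟩ := Ideal.Quotient.mk_surjective a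
  obtain ⟨B, rfl⟩ := Ideal.Quotient.mk_surjective b
  have hdvd : X 0 * X 1 ∣ B * X 1 - A * X 0 := by
    rw [← Ideal.mem_span_singleton, ← Ideal.Quotient.eq, map_mul, map_mul]
    exact hab
  have hX0 : (X 0 : MvPowerSeries (Fin 2) ℂ) ∣ X 1 * B := by
    rw [mul_comm, ← dvd_sub_left (dvd_mul_left (X 0) A)]
    exact (dvd_mul_right _ _).trans hdvd
  obtain ⟨C, rfl⟩ := X_dvd_of_dvd_X_mul (by decide) hX0
  rw [← hab, ← map_mul, Ideal.Quotient.eq_zero_iff_mem, Ideal.mem_span_singleton]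
  exact ⟨C, by ring⟩

theorem one_notMem_nodalMaxIdeal : (1 : NodalLocalRing) ∉ nodalMaxIdeal := by
  let ev : NodalLocalRing →+* ℂ := Ideal.Quotient.lift _ constantCoeff fun a ha => by
    obtain ⟨s, rfl⟩ := Ideal.mem_span_singleton'.1 ha
    simp
  have hle : nodalMaxIdeal ≤ RingHom.ker ev := by
    simp [Ideal.span_le, Set.insert_subset_iff, ev]
  intro h
  simpa using hle h

theorem y_ne_y_mul_of_mem {u : NodalLocalRing} (hu : u ∈ nodalMaxIdeal) : y ≠ y * u := by
  intro h
  have hx : x ∣ 1 - u := x_dvd_of_y_mul_eq_zero (by linear_combination h)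
  have h1 : 1 - u ∈ nodalMaxIdeal := Ideal.mem_of_dvd _ hx (Ideal.subset_span (by simp))
  exact one_notMem_nodalMaxIdeal (by simpa using add_mem h1 hu)

theorem y_mem_nodalMaxIdeal : y ∈ nodalMaxIdeal := Ideal.subset_span (by simp)

theorem x_smul_y_mem : x • (⟨y, y_mem_nodalMaxIdeal⟩ : nodalMaxIdeal) = 0 :=
  Subtype.ext x_mul_y

theorem not_flat_of_x_smul_eq_zero {M : Type*} [AddCommGroup M] [Module NodalLocalRing M]
    (E : M →ₗ[NodalLocalRing] NodalLocalRing) (hE : ∀ w, E w ∈ nodalMaxIdeal) {v : M}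
    (hv : x • v = 0) (hEv : E v = y) : ¬ Module.Flat NodalLocalRing M := by
  intro
  obtain ⟨w, rfl⟩ := Module.Flat.exists_eq_smul_of_smul_eq_zero
    (fun _ => y_dvd_of_x_mul_eq_zero) hv
  rw [map_smul, smul_eq_mul] at hEv
  exact y_ne_y_mul_of_mem (hE w) hEv.symm

/-- The projection of `𝔪 = (x) ⊕ (y)` onto the branch `(y)`. -/
noncomputable def yBranch : nodalMaxIdeal →ₗ[NodalLocalRing] NodalLocalRing :=
  Ideal.projOfDisjoint disjoint_span_x_span_y ∘ₗ Submodule.inclusion nodalMaxIdeal_eq_sup.le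

theorem yBranch_mem_span_y (m : nodalMaxIdeal) : yBranch m ∈ Ideal.span {y} :=
  Ideal.projOfDisjoint_apply_mem _ _

theorem yBranch_y : yBranch ⟨y, y_mem_nodalMaxIdeal⟩ = y :=
  Ideal.projOfDisjoint_apply_of_mem _ (Ideal.mem_span_singleton_self y)

theorem x_smul_yBranch : x • yBranch = 0 := by
  ext m
  obtain ⟨c, hc⟩ := Ideal.mem_span_singleton'.1 (yBranch_mem_span_y m)
  simp [← hc, mul_left_comm x c, x_mul_y]

theorem not_flat_hom_max_self :
    ¬ Module.Flat NodalLocalRing (nodalMaxIdeal →ₗ[NodalLocalRing] NodalLocalRing) :=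
  not_flat_of_x_smul_eq_zero (LinearMap.applyₗ ⟨y, y_mem_nodalMaxIdeal⟩)
    (fun f => Ideal.mem_of_dvd _ (y_dvd_of_x_mul_eq_zero (by
      rw [LinearMap.applyₗ_apply_apply, ← smul_eq_mul, ← f.map_smul, x_smul_y_mem, map_zero]))
      y_mem_nodalMaxIdeal)
    x_smul_yBranch yBranch_y

theorem not_flat_hom_self_max :
    ¬ Module.Flat NodalLocalRing (NodalLocalRing →ₗ[NodalLocalRing] nodalMaxIdeal) := by
  refine not_flat_of_x_smul_eq_zero
    (nodalMaxIdeal.subtype ∘ₗ LinearMap.applyₗ (1 : NodalLocalRing)) (fun f => (f 1).2)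
    (v := LinearMap.toSpanSingleton NodalLocalRing nodalMaxIdeal ⟨y, y_mem_nodalMaxIdeal⟩) ?_ ?_
  · refine LinearMap.ext_ring ?_
    rw [LinearMap.smul_apply, LinearMap.toSpanSingleton_apply, one_smul, x_smul_y_mem,
      LinearMap.zero_apply]
  · simp

theorem not_flat_hom_max_max :
    ¬ Module.Flat NodalLocalRing (nodalMaxIdeal →ₗ[NodalLocalRing] nodalMaxIdeal) :=
  not_flat_of_x_smul_eq_zero
    (nodalMaxIdeal.subtype ∘ₗ LinearMap.applyₗ ⟨y, y_mem_nodalMaxIdeal⟩) (fun f => (f _).2)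
    (v := yBranch.codRestrict nodalMaxIdeal fun m => Ideal.mem_of_dvd _
      (Ideal.mem_span_singleton.1 (yBranch_mem_span_y m)) y_mem_nodalMaxIdeal)
    (by ext m; simpa using congr($x_smul_yBranch m)) (by simpa using yBranch_y)

end NodalLocalRing

/-- Among the four `Hom` modules between `A` and `𝔪` over the nodal local ring
`A = ℂ[[x,y]]/(xy)`, only `Hom_A(A, A) ≅ A` is free. -/
theorem stmt_6 :
    ¬ Module.Free NodalLocalRing (nodalMaxIdeal →ₗ[NodalLocalRing] NodalLocalRing) ∧
    ¬ Module.Free NodalLocalRing (NodalLocalRing →ₗ[NodalLocalRing] nodalMaxIdeal) ∧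
    ¬ Module.Free NodalLocalRing (nodalMaxIdeal →ₗ[NodalLocalRing] nodalMaxIdeal) ∧
    Module.Free NodalLocalRing (NodalLocalRing →ₗ[NodalLocalRing] NodalLocalRing) ∧
    Nonempty ((NodalLocalRing →ₗ[NodalLocalRing] NodalLocalRing)
      ≃ₗ[NodalLocalRing] NodalLocalRing) := by
  let e := LinearMap.ringLmapEquivSelf NodalLocalRing NodalLocalRing NodalLocalRing
  exact ⟨fun _ => NodalLocalRing.not_flat_hom_max_self inferInstance,
    fun _ => NodalLocalRing.not_flat_hom_self_max inferInstance,
    fun _ => NodalLocalRing.not_flat_hom_max_max inferInstance,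
    Module.Free.of_equiv e.symm, ⟨e⟩⟩
end

section
/- Let A = ℂ[[x,y]]/(xy) with maximal ideal 𝔪 = (x,y). Then Hom_A(𝔪, 𝔪) is isomorphic as an A-module to the normalization ℂ[[x]] × ℂ[[y]] of A, and in particular requires 2 generators. -/
open MvPowerSeries

/-- The normalization `ℂ[[x]] × ℂ[[y]]` of the nodal local ring. -/
abbrev NodalNormalization : Type := PowerSeries ℂ × PowerSeries ℂ

/-!
The branch maps `F ↦ F(x, 0)` and `F ↦ F(0, y)` embed `A` into `B = ℂ[[x]] × ℂ[[y]]`, and the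
embedding carries `𝔪` onto `t B` for the non-zero-divisor `t = (x, y)`; hence `𝔪 ≅ B` as
`A`-modules. As `t B ⊆ A`, every `A`-linear `f : B → B` is `B`-linear: `t f(b) = f(t b) =
t b f(1)`, and cancelling `t` gives `f(b) = b f(1)`. So `End_A(𝔪) ≅ End_A(B) = B`, which is
generated by `(1, 0)` and `(0, 1)`. It is not cyclic: on constant terms `A` acts on `ℂ × ℂ`
through the diagonal copy of `ℂ`, and `ℂ × ℂ` is not cyclic over `ℂ`.
-/

section

variable {A B : Type*} [CommRing A] [CommRing B] [Algebra A B]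

theorem LinearMap.map_eq_mul_map_one_of_isLeftRegular {t : B} (ht : IsLeftRegular t)
    (hrange : ∀ b, t * b ∈ Set.range (algebraMap A B)) (f : B →ₗ[A] B) (b : B) :
    f b = b * f 1 := by
  obtain ⟨a₀, ha₀⟩ := hrange 1
  obtain ⟨a, ha⟩ := hrange b
  rw [mul_one] at ha₀
  apply ht
  calc t * f b = f (a₀ • b) := by rw [map_smul, Algebra.smul_def, ha₀]
    _ = f (a • 1) := by rw [Algebra.smul_def, Algebra.smul_def, ha₀, ha, mul_one]
    _ = t * (b * f 1) := by rw [map_smul, Algebra.smul_def, ha, mul_assoc]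

noncomputable def Module.End.equivOfIsLeftRegular {t : B} (ht : IsLeftRegular t)
    (hrange : ∀ b, t * b ∈ Set.range (algebraMap A B)) : Module.End A B ≃ₗ[A] B where
  toFun f := f 1
  invFun b := LinearMap.mulLeft A b
  map_add' _ _ := rfl
  map_smul' _ _ := rfl
  left_inv f := LinearMap.ext fun b => by
    rw [LinearMap.mulLeft_apply, mul_comm, LinearMap.map_eq_mul_map_one_of_isLeftRegular ht hrange]
  right_inv b := mul_one b

noncomputable def Ideal.equivOfMapEqRangeMulLeft (hinj : Function.Injective (algebraMap A B))
    (I : Ideal A) {t : B} (ht : IsLeftRegular t)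
    (hI : Submodule.map (Algebra.linearMap A B) I = LinearMap.range (LinearMap.mulLeft A t)) :
    I ≃ₗ[A] B :=
  (Submodule.equivMapOfInjective _ hinj I).trans <| (LinearEquiv.ofEq _ _ hI).trans
    (LinearEquiv.ofInjective (LinearMap.mulLeft A t) ht).symm

noncomputable def Ideal.endEquivOfMapEqRangeMulLeft
    (hinj : Function.Injective (algebraMap A B)) (I : Ideal A) {t : B} (ht : IsLeftRegular t)
    (hI : Submodule.map (Algebra.linearMap A B) I = LinearMap.range (LinearMap.mulLeft A t)) :
    Module.End A I ≃ₗ[A] B :=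
  (Ideal.equivOfMapEqRangeMulLeft hinj I ht hI).conj.trans <|
    Module.End.equivOfIsLeftRegular ht fun b => by
      obtain ⟨a, -, ha⟩ := (hI ▸ LinearMap.mem_range_self (LinearMap.mulLeft A t) b :
        t * b ∈ Submodule.map (Algebra.linearMap A B) I)
      exact ⟨a, ha⟩

end

theorem LinearEquiv.span_image_eq_top_iff {R M N : Type*} [Semiring R] [AddCommMonoid M]
    [AddCommMonoid N] [Module R M] [Module R N] (e : M ≃ₗ[R] N) (s : Set M) :
    Submodule.span R (e '' s) = ⊤ ↔ Submodule.span R s = ⊤ := by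
  rw [Submodule.span_image_linearEquiv, Submodule.map_eq_top_iff]

theorem Finsupp.fin_two_eq_single_of_apply_eq_zero {i j : Fin 2} (hij : j ≠ i)
    {m : Fin 2 →₀ ℕ} (hm : m j = 0) : m = Finsupp.single i (m i) := by
  ext k
  by_cases hk : k = i
  · simp [hk]
  · obtain rfl : k = j := by omega
    simp [hm, hk]

namespace NodalLocalRing

noncomputable def branch (i : Fin 2) : MvPowerSeries (Fin 2) ℂ →ₐ[ℂ] PowerSeries ℂ :=
  killCompl (Function.Embedding.punit i)

noncomputable def ofBranch (i : Fin 2) : PowerSeries ℂ →ₐ[ℂ] MvPowerSeries (Fin 2) ℂ :=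
  rename (Function.Embedding.punit i)

@[simp] theorem branch_ofBranch (i : Fin 2) (p : PowerSeries ℂ) : branch i (ofBranch i p) = p :=
  killCompl_rename_app p

@[simp] theorem branch_X_self (i : Fin 2) : branch i (X i) = PowerSeries.X :=
  killCompl_X (e := Function.Embedding.punit i) PUnit.unit

theorem branch_X_of_ne {i j : Fin 2} (h : j ≠ i) : branch i (X j) = 0 :=
  killCompl_X_eq_zero (by simpa [Function.Embedding.punit] using h)

theorem coeff_branch (i : Fin 2) (F : MvPowerSeries (Fin 2) ℂ) (n : ℕ) :
    PowerSeries.coeff n (branch i F) = coeff (Finsupp.single i n) F := by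
  rw [PowerSeries.coeff, branch, coeff_killCompl, Finsupp.embDomain_single]
  rfl

theorem constantCoeff_branch (i : Fin 2) (F : MvPowerSeries (Fin 2) ℂ) :
    PowerSeries.constantCoeff (branch i F) = constantCoeff F := by
  rw [← PowerSeries.coeff_zero_eq_constantCoeff_apply, coeff_branch, Finsupp.single_zero,
    coeff_zero_eq_constantCoeff_apply]

theorem X_mul_X_dvd_of_branch_eq_zero {F : MvPowerSeries (Fin 2) ℂ} (h₀ : branch 0 F = 0)
    (h₁ : branch 1 F = 0) : X 0 * X 1 ∣ F := by
  obtain ⟨G, rfl⟩ : X 0 ∣ F := X_dvd_iff.mpr fun m hm => by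
    rw [Finsupp.fin_two_eq_single_of_apply_eq_zero zero_ne_one hm, ← coeff_branch, h₁, map_zero]
  obtain ⟨H, rfl⟩ : X 1 ∣ G := X_dvd_iff.mpr fun m hm => by
    calc coeff m G = coeff (Finsupp.single 0 1 + Finsupp.single 0 (m 0)) (X 0 * G) := by
          rw [X_def, coeff_add_monomial_mul, one_mul,
            ← Finsupp.fin_two_eq_single_of_apply_eq_zero one_ne_zero hm]
      _ = 0 := by rw [← Finsupp.single_add, ← coeff_branch, h₀, map_zero]
  exact ⟨H, (mul_assoc _ _ _).symm⟩

noncomputable def toNormalization : NodalLocalRing →+* NodalNormalization :=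
  Ideal.Quotient.lift _ ((branch 0 : _ →+* _).prod (branch 1 : _ →+* _)) fun a ha => by
    obtain ⟨c, rfl⟩ := Ideal.mem_span_singleton'.mp ha
    ext <;> simp [branch_X_of_ne]

theorem toNormalization_mk (F : MvPowerSeries (Fin 2) ℂ) :
    toNormalization (Ideal.Quotient.mk _ F) = (branch 0 F, branch 1 F) :=
  rfl

theorem toNormalization_X_zero :
    toNormalization (Ideal.Quotient.mk _ (X 0)) = (PowerSeries.X, 0) := by
  simp [toNormalization_mk, branch_X_of_ne]

theorem toNormalization_X_one :
    toNormalization (Ideal.Quotient.mk _ (X 1)) = (0, PowerSeries.X) := by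
  simp [toNormalization_mk, branch_X_of_ne]

theorem toNormalization_injective : Function.Injective toNormalization := by
  refine (injective_iff_map_eq_zero _).mpr fun a ha => ?_
  obtain ⟨F, rfl⟩ := Ideal.Quotient.mk_surjective a
  rw [toNormalization_mk, Prod.mk_eq_zero] at ha
  exact Ideal.Quotient.eq_zero_iff_mem.mpr
    (Ideal.mem_span_singleton.mpr (X_mul_X_dvd_of_branch_eq_zero ha.1 ha.2))

theorem constantCoeff_toNormalization_fst_eq_snd (a : NodalLocalRing) :
    PowerSeries.constantCoeff (toNormalization a).1 =
      PowerSeries.constantCoeff (toNormalization a).2 := by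
  obtain ⟨F, rfl⟩ := Ideal.Quotient.mk_surjective a
  simp only [toNormalization_mk, constantCoeff_branch]

noncomputable abbrev normalizationAlgebra : Algebra NodalLocalRing NodalNormalization :=
  toNormalization.toAlgebra

section

attribute [local instance] normalizationAlgebra

theorem smul_normalization (a : NodalLocalRing) (b : NodalNormalization) :
    a • b = toNormalization a * b :=
  rfl

theorem smul_ofBranch_zero (p q : PowerSeries ℂ) :
    (Ideal.Quotient.mk _ (ofBranch 0 p) : NodalLocalRing) • ((q, 0) : NodalNormalization) =
      (p * q, 0) := by
  simp [smul_normalization, toNormalization_mk]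

theorem smul_ofBranch_one (p q : PowerSeries ℂ) :
    (Ideal.Quotient.mk _ (ofBranch 1 p) : NodalLocalRing) • ((0, q) : NodalNormalization) =
      (0, p * q) := by
  simp [smul_normalization, toNormalization_mk]

theorem span_unit_vectors_eq_top :
    Submodule.span NodalLocalRing {((1, 0) : NodalNormalization), (0, 1)} = ⊤ := by
  refine eq_top_iff.mpr fun ⟨p, q⟩ _ => Submodule.mem_span_pair.mpr
    ⟨Ideal.Quotient.mk _ (ofBranch 0 p), Ideal.Quotient.mk _ (ofBranch 1 q), ?_⟩
  rw [smul_ofBranch_zero, smul_ofBranch_one]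
  simp

theorem span_singleton_normalization_ne_top (b : NodalNormalization) :
    Submodule.span NodalLocalRing {b} ≠ ⊤ := by
  intro h
  have hmem (c : NodalNormalization) : ∃ a : NodalLocalRing, a • b = c :=
    Submodule.mem_span_singleton.mp (h ▸ Submodule.mem_top)
  obtain ⟨a, ha⟩ := hmem (1, 0)
  obtain ⟨a', ha'⟩ := hmem (0, 1)
  simp only [smul_normalization, Prod.ext_iff, Prod.fst_mul, Prod.snd_mul] at ha ha'
  have h₁ := congrArg PowerSeries.constantCoeff ha.1
  have h₂ := congrArg PowerSeries.constantCoeff ha.2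
  have h₃ := congrArg PowerSeries.constantCoeff ha'.2
  simp only [map_mul, map_one, map_zero, ← constantCoeff_toNormalization_fst_eq_snd] at h₁ h₂ h₃
  have : PowerSeries.constantCoeff b.2 = 0 :=
    (mul_eq_zero.mp h₂).resolve_left (left_ne_zero_of_mul_eq_one h₁)
  simp [this] at h₃

theorem map_nodalMaxIdeal :
    Submodule.map (Algebra.linearMap NodalLocalRing NodalNormalization) nodalMaxIdeal =
      LinearMap.range (LinearMap.mulLeft NodalLocalRing
        ((PowerSeries.X, PowerSeries.X) : NodalNormalization)) := by
  unfold nodalMaxIdeal Ideal.span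
  rw [Submodule.map_span, Set.image_pair, Algebra.linearMap_apply,
    Algebra.linearMap_apply, RingHom.algebraMap_toAlgebra, toNormalization_X_zero,
    toNormalization_X_one]
  apply le_antisymm
  · rw [Submodule.span_le, Set.insert_subset_iff, Set.singleton_subset_iff]
    exact ⟨⟨(1, 0), by simp⟩, ⟨(0, 1), by simp⟩⟩
  · rintro _ ⟨⟨p, q⟩, rfl⟩
    refine Submodule.mem_span_pair.mpr
      ⟨Ideal.Quotient.mk _ (ofBranch 0 p), Ideal.Quotient.mk _ (ofBranch 1 q), ?_⟩
    rw [smul_ofBranch_zero, smul_ofBranch_one]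
    simp [mul_comm]

noncomputable def endNodalMaxIdealEquiv :
    Module.End NodalLocalRing nodalMaxIdeal ≃ₗ[NodalLocalRing] NodalNormalization :=
  Ideal.endEquivOfMapEqRangeMulLeft toNormalization_injective nodalMaxIdeal
    ((IsRegular.of_ne_zero PowerSeries.X_ne_zero).left.prodMk
      (IsRegular.of_ne_zero PowerSeries.X_ne_zero).left) map_nodalMaxIdeal

theorem exists_span_pair_end_eq_top :
    ∃ f g : Module.End NodalLocalRing nodalMaxIdeal, Submodule.span NodalLocalRing {f, g} = ⊤ :=
  ⟨endNodalMaxIdealEquiv.symm (1, 0), endNodalMaxIdealEquiv.symm (0, 1), by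
    rw [← Set.image_pair, LinearEquiv.span_image_eq_top_iff, span_unit_vectors_eq_top]⟩

theorem span_singleton_end_ne_top (f : Module.End NodalLocalRing nodalMaxIdeal) :
    Submodule.span NodalLocalRing {f} ≠ ⊤ := by
  rw [Ne, ← endNodalMaxIdealEquiv.span_image_eq_top_iff, Set.image_singleton]
  exact span_singleton_normalization_ne_top _

end

end NodalLocalRing

/-- `Hom_A(𝔪, 𝔪)` is isomorphic, as an `A`-module, to the normalization
`ℂ[[x]] × ℂ[[y]]` of `A = ℂ[[x,y]]/(xy)` (where `A` acts on the normalization via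
the ring homomorphism sending `x` to `(x, 0)` and `y` to `(0, y)`); in particular
it is generated by `2` elements and is not cyclic. -/
theorem stmt_7 :
    (∃ ν : NodalLocalRing →+* NodalNormalization,
      ν (Ideal.Quotient.mk _ (MvPowerSeries.X 0)) = (PowerSeries.X, 0) ∧
      ν (Ideal.Quotient.mk _ (MvPowerSeries.X 1)) = (0, PowerSeries.X) ∧
      (letI : Module NodalLocalRing NodalNormalization := Module.compHom _ ν
       Nonempty ((nodalMaxIdeal →ₗ[NodalLocalRing] nodalMaxIdeal)
          ≃ₗ[NodalLocalRing] NodalNormalization))) ∧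
    (∃ f g : nodalMaxIdeal →ₗ[NodalLocalRing] nodalMaxIdeal,
      Submodule.span NodalLocalRing {f, g} = ⊤) ∧
    (∀ f : nodalMaxIdeal →ₗ[NodalLocalRing] nodalMaxIdeal,
      Submodule.span NodalLocalRing {f} ≠ ⊤) := by
  open NodalLocalRing in
  exact ⟨⟨toNormalization, toNormalization_X_zero, toNormalization_X_one,
    ⟨endNodalMaxIdealEquiv⟩⟩, exists_span_pair_end_eq_top, span_singleton_end_ne_top⟩
end
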